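/- arXiv:math/0305374 — 2 statements merged into one kernel-verified Lean document; each statement's English description precedes it below -/
import Mathlib

section
/- Let f : [a,b] → ℝ be a convex function on [a,b]. Then for every x ∈ [a,b]: (x−a)·f(a) + (b−x)·f(b) − ∫_a^b f(t) dt ≤ (1/2)·[ (b−x)²·f′₋(b) − (x−a)²·f′₊(a) ], where f′₊(a) is the right derivative of f at a and f′₋(b) is the left derivative of f at b (assumed finite). -/
/-!
On `[a, x]` the convex function `f` lies above its right tangent line at `a`, and on `[x, b]`
above its left tangent line at `b`. Integrating these two affine minorants bounds
`∫_a^b f` from below by `(x - a) f(a) + A (x - a)² / 2 + (b - x) f(b) - B (b - x)² / 2`.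
-/

open MeasureTheory Set intervalIntegral

namespace ConvexOn

variable {S : Set ℝ} {f : ℝ → ℝ} {x y f' : ℝ}

theorem add_mul_sub_le_of_hasDerivWithinAt_Ioi (hf : ConvexOn ℝ S f) (hx : x ∈ S) (hy : y ∈ S)
    (hxy : x ≤ y) (hf' : HasDerivWithinAt f f' (Ioi x) x) : f x + f' * (y - x) ≤ f y := by
  obtain rfl | hxy := hxy.eq_or_lt
  · simp
  have := hf.le_slope_of_hasDerivWithinAt_Ioi hx hy hxy hf'
  rw [slope_def_field, le_div_iff₀ (sub_pos.2 hxy)] at this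
  linarith

theorem add_mul_sub_le_of_hasDerivWithinAt_Iio (hf : ConvexOn ℝ S f) (hx : x ∈ S) (hy : y ∈ S)
    (hyx : y ≤ x) (hf' : HasDerivWithinAt f f' (Iio x) x) : f x + f' * (y - x) ≤ f y := by
  obtain rfl | hyx := hyx.eq_or_lt
  · simp
  have := hf.slope_le_of_hasDerivWithinAt_Iio hy hx hyx hf'
  rw [slope_def_field, div_le_iff₀ (sub_pos.2 hyx)] at this
  linarith

variable {a b t : ℝ}

/-- Convexity at the midpoint of `t` and its mirror image `a + b - t` bounds `f t` below. -/
theorem two_mul_sub_max_le_of_mem_Icc (hf : ConvexOn ℝ (Icc a b) f) (ht : t ∈ Icc a b) :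
    2 * f ((a + b) / 2) - max (f a) (f b) ≤ f t := by
  have hab : a ≤ b := ht.1.trans ht.2
  have hmirror : a + b - t ∈ Icc a b := ⟨by linarith [ht.2], by linarith [ht.1]⟩
  have hmid := hf.2 ht hmirror (by norm_num : (0 : ℝ) ≤ 1 / 2) (by norm_num : (0 : ℝ) ≤ 1 / 2)
    (by norm_num)
  have hmax := hf.le_max_of_mem_Icc (left_mem_Icc.2 hab) (right_mem_Icc.2 hab) hmirror
  rw [smul_eq_mul, smul_eq_mul, smul_eq_mul, smul_eq_mul,
    show 1 / 2 * t + 1 / 2 * (a + b - t) = (a + b) / 2 by ring] at hmid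
  linarith

theorem integrableOn_Icc (hf : ConvexOn ℝ (Icc a b) f) : IntegrableOn f (Icc a b) := by
  rw [integrableOn_Icc_iff_integrableOn_Ioo]
  have hcont : ContinuousOn f (Ioo a b) :=
    (hf.subset Ioo_subset_Icc_self (convex_Ioo a b)).continuousOn isOpen_Ioo
  refine ⟨hcont.aestronglyMeasurable measurableSet_Ioo, .restrict_of_bounded
    (C := |2 * f ((a + b) / 2) - max (f a) (f b)| + |max (f a) (f b)|) measure_Ioo_lt_top ?_⟩
  filter_upwards [ae_restrict_mem measurableSet_Ioo] with t ht
  have ht' := Ioo_subset_Icc_self ht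
  have hab : a ≤ b := ht'.1.trans ht'.2
  have hlow := hf.two_mul_sub_max_le_of_mem_Icc ht'
  have hup := hf.le_max_of_mem_Icc (left_mem_Icc.2 hab) (right_mem_Icc.2 hab) ht'
  rw [Real.norm_eq_abs, abs_le]
  constructor <;> cases abs_cases (2 * f ((a + b) / 2) - max (f a) (f b)) <;>
    cases abs_cases (max (f a) (f b)) <;> linarith

theorem intervalIntegrable (hf : ConvexOn ℝ (Icc a b) f) (hab : a ≤ b) :
    IntervalIntegrable f volume a b :=
  (intervalIntegrable_iff_integrableOn_Icc_of_le hab).2 hf.integrableOn_Icc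

end ConvexOn

theorem integral_add_mul_sub (c m p u v : ℝ) :
    ∫ t in u..v, (c + m * (t - p)) = (v - u) * c + m * ((v - p) ^ 2 - (u - p) ^ 2) / 2 := by
  rw [intervalIntegral.integral_add intervalIntegrable_const
    ((by fun_prop : Continuous fun t => m * (t - p)).intervalIntegrable _ _),
    intervalIntegral.integral_const_mul, intervalIntegral.integral_comp_sub_right (fun t => t),
    integral_id, intervalIntegral.integral_const]
  simp only [smul_eq_mul]
  ring

theorem trapezoid_convex_upper_bound_general
    (a b : ℝ) (f : ℝ → ℝ)
    (hf : ConvexOn ℝ (Set.Icc a b) f) (A B : ℝ)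
    (hA : HasDerivWithinAt f A (Set.Ici a) a)
    (hB : HasDerivWithinAt f B (Set.Iic b) b)
    (x : ℝ) (hx : x ∈ Set.Icc a b) :
    (x - a) * f a + (b - x) * f b - (∫ t in a..b, f t) ≤
      (1 / 2) * ((b - x) ^ 2 * B - (x - a) ^ 2 * A) := by
  obtain ⟨hax, hxb⟩ := hx
  have ha : a ∈ Icc a b := left_mem_Icc.2 (hax.trans hxb)
  have hb : b ∈ Icc a b := right_mem_Icc.2 (hax.trans hxb)
  have hint_left : IntervalIntegrable f volume a x :=
    (hf.subset (Icc_subset_Icc le_rfl hxb) (convex_Icc a x)).intervalIntegrable hax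
  have hint_right : IntervalIntegrable f volume x b :=
    (hf.subset (Icc_subset_Icc hax le_rfl) (convex_Icc x b)).intervalIntegrable hxb
  have hleft : ∫ t in a..x, (f a + A * (t - a)) ≤ ∫ t in a..x, f t :=
    integral_mono_on hax ((by fun_prop : Continuous _).intervalIntegrable _ _) hint_left
      fun t ht => hf.add_mul_sub_le_of_hasDerivWithinAt_Ioi ha ⟨ht.1, ht.2.trans hxb⟩ ht.1
        (hA.mono Ioi_subset_Ici_self)
  have hright : ∫ t in x..b, (f b + B * (t - b)) ≤ ∫ t in x..b, f t :=
    integral_mono_on hxb ((by fun_prop : Continuous _).intervalIntegrable _ _) hint_right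
      fun t ht => hf.add_mul_sub_le_of_hasDerivWithinAt_Iio hb ⟨hax.trans ht.1, ht.2⟩ ht.2
        (hB.mono Iio_subset_Iic_self)
  rw [integral_add_mul_sub] at hleft hright
  rw [← integral_add_adjacent_intervals hint_left hint_right]
  linarith

/-- **Upper bound in the generalised trapezoid inequality for convex functions**
(Theorem 3): for a convex `f : [a,b] → ℝ` with finite right derivative `A` at `a`
and finite left derivative `B` at `b`, for every `x ∈ [a,b]`,
`(x−a)f(a) + (b−x)f(b) − ∫_a^b f ≤ (1/2)[(b−x)² f′₋(b) − (x−a)² f′₊(a)]`. -/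
theorem trapezoid_convex_upper_bound
    (a b : ℝ) (hab : a < b) (f : ℝ → ℝ)
    (hf : ConvexOn ℝ (Set.Icc a b) f) (A B : ℝ)
    (hA : HasDerivWithinAt f A (Set.Ici a) a)
    (hB : HasDerivWithinAt f B (Set.Iic b) b)
    (x : ℝ) (hx : x ∈ Set.Icc a b) :
    (x - a) * f a + (b - x) * f b - (∫ t in a..b, f t) ≤
      (1 / 2) * ((b - x) ^ 2 * B - (x - a) ^ 2 * A) :=
  trapezoid_convex_upper_bound_general a b f hf A B hA hB x hx
end

section
/- Let f : [a,b] → ℝ be a convex function on [a,b] with finite one-sided derivatives f′₊(a) and f′₋(b). Then 0 ≤ (f(a) + f(b))/2 − (1/(b−a))·∫_a^b f(t) dt ≤ (1/8)·[ f′₋(b) − f′₊(a) ]·(b−a). -/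
/-!
The chord of `f` over `[a, b]` lies above `f`, so the integral is at most the trapezoid value
`(f a + f b) / 2 * (b - a)`. Below, `f` lies above its tangent at `a` on `[a, (a + b) / 2]` and
above its tangent at `b` on `[(a + b) / 2, b]`; integrating these two tangent lines undercuts the
trapezoid value by exactly `(B - A) * (b - a) ^ 2 / 8`.
-/

open MeasureTheory Set intervalIntegral

theorem intervalIntegral.integral_const_add_mul_sub (c k x₀ a b : ℝ) :
    ∫ t in a..b, (c + k * (t - x₀)) = c * (b - a) + k * ((b - x₀) ^ 2 - (a - x₀) ^ 2) / 2 := by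
  rw [integral_add intervalIntegrable_const
      ((by fun_prop : Continuous fun t : ℝ => k * (t - x₀)).intervalIntegrable a b),
    integral_const_mul, integral_comp_sub_right (fun x => x), integral_id, integral_const,
    smul_eq_mul]
  ring

namespace ConvexOn

variable {S : Set ℝ} {f : ℝ → ℝ} {a b t : ℝ}

theorem le_add_div_mul_sub (hf : ConvexOn ℝ S f) (ha : a ∈ S) (hb : b ∈ S) (ht : t ∈ S)
    (hat : a ≤ t) (htb : t ≤ b) : f t ≤ f a + (f b - f a) / (b - a) * (t - a) := by
  rcases hat.eq_or_lt with rfl | hat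
  · simp
  have hslope := hf.secant_mono ha ht hb hat.ne' (hat.trans_le htb).ne' htb
  rw [div_le_iff₀ (sub_pos.2 hat)] at hslope
  linarith

theorem add_mul_sub_le_of_hasDerivWithinAt_Ioi_s11 (hf : ConvexOn ℝ S f) (ha : a ∈ S) (ht : t ∈ S)
    (hat : a ≤ t) {A : ℝ} (hA : HasDerivWithinAt f A (Ioi a) a) : f a + A * (t - a) ≤ f t := by
  rcases hat.eq_or_lt with rfl | hat
  · simp
  have hslope := hf.le_slope_of_hasDerivWithinAt_Ioi ha ht hat hA
  rw [slope_def_field, le_div_iff₀ (sub_pos.2 hat)] at hslope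
  linarith

theorem add_mul_sub_le_of_hasDerivWithinAt_Iio_s11 (hf : ConvexOn ℝ S f) (hb : b ∈ S) (ht : t ∈ S)
    (htb : t ≤ b) {B : ℝ} (hB : HasDerivWithinAt f B (Iio b) b) : f b + B * (t - b) ≤ f t := by
  rcases htb.eq_or_lt with rfl | htb
  · simp
  have hslope := hf.slope_le_of_hasDerivWithinAt_Iio ht hb htb hB
  rw [slope_def_field, div_le_iff₀ (sub_pos.2 htb)] at hslope
  linarith

variable (hf : ConvexOn ℝ (Icc a b) f) (hab : a ≤ b) (hfi : IntervalIntegrable f volume a b)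
include hf hab hfi

theorem integral_le_trapezoid : ∫ t in a..b, f t ≤ (f a + f b) / 2 * (b - a) := by
  have ha : a ∈ Icc a b := left_mem_Icc.2 hab
  have hb : b ∈ Icc a b := right_mem_Icc.2 hab
  have hchord := integral_mono_on hab hfi ((by fun_prop : Continuous fun t : ℝ =>
    f a + (f b - f a) / (b - a) * (t - a)).intervalIntegrable a b) fun t ht =>
      hf.le_add_div_mul_sub ha hb ht ht.1 ht.2
  rw [integral_const_add_mul_sub] at hchord
  rcases hab.eq_or_lt with rfl | hab
  · simp
  convert hchord using 1
  field_simp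
  ring

theorem le_integral_of_hasDerivWithinAt_Ioi {A : ℝ} (hA : HasDerivWithinAt f A (Ioi a) a) :
    f a * (b - a) + A * (b - a) ^ 2 / 2 ≤ ∫ t in a..b, f t := by
  have htangent := integral_mono_on hab ((by fun_prop : Continuous fun t : ℝ =>
    f a + A * (t - a)).intervalIntegrable a b) hfi fun t ht =>
      hf.add_mul_sub_le_of_hasDerivWithinAt_Ioi_s11 (left_mem_Icc.2 hab) ht ht.1 hA
  rw [integral_const_add_mul_sub] at htangent
  convert htangent using 1
  ring

theorem le_integral_of_hasDerivWithinAt_Iio {B : ℝ} (hB : HasDerivWithinAt f B (Iio b) b) :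
    f b * (b - a) - B * (b - a) ^ 2 / 2 ≤ ∫ t in a..b, f t := by
  have htangent := integral_mono_on hab ((by fun_prop : Continuous fun t : ℝ =>
    f b + B * (t - b)).intervalIntegrable a b) hfi fun t ht =>
      hf.add_mul_sub_le_of_hasDerivWithinAt_Iio_s11 (right_mem_Icc.2 hab) ht ht.2 hB
  rw [integral_const_add_mul_sub] at htangent
  convert htangent using 1
  ring

end ConvexOn

/-- **Counterpart of the Hermite–Hadamard inequality** (Corollary 3): for a
convex `f : [a,b] → ℝ` with finite right derivative `A` at `a` and finite left
derivative `B` at `b`,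
`0 ≤ (f(a)+f(b))/2 − (1/(b−a))∫_a^b f ≤ (1/8)[f′₋(b) − f′₊(a)](b−a)`. -/
theorem hermite_hadamard_difference_upper_bound
    (a b : ℝ) (hab : a < b) (f : ℝ → ℝ)
    (hf : ConvexOn ℝ (Set.Icc a b) f) (A B : ℝ)
    (hA : HasDerivWithinAt f A (Set.Ici a) a)
    (hB : HasDerivWithinAt f B (Set.Iic b) b) :
    0 ≤ (f a + f b) / 2 - (1 / (b - a)) * ∫ t in a..b, f t ∧
      (f a + f b) / 2 - (1 / (b - a)) * (∫ t in a..b, f t) ≤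
        (1 / 8) * (B - A) * (b - a) := by
  set m := (a + b) / 2 with hm_def
  have ham : a ≤ m := by linarith [hm_def]
  have hmb : m ≤ b := by linarith [hm_def]
  have hcont := hf.continuousOn_Icc hab hA.continuousWithinAt hB.continuousWithinAt
  have hfi_left : IntervalIntegrable f volume a m :=
    (hcont.mono (Icc_subset_Icc_right hmb)).intervalIntegrable_of_Icc ham
  have hfi_right : IntervalIntegrable f volume m b :=
    (hcont.mono (Icc_subset_Icc_left ham)).intervalIntegrable_of_Icc hmb
  have hupper := hf.integral_le_trapezoid hab.le (hfi_left.trans hfi_right)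
  have hlower_left := (hf.subset (Icc_subset_Icc_right hmb) (convex_Icc a m))
    |>.le_integral_of_hasDerivWithinAt_Ioi ham hfi_left (hA.mono Ioi_subset_Ici_self)
  have hlower_right := (hf.subset (Icc_subset_Icc_left ham) (convex_Icc m b))
    |>.le_integral_of_hasDerivWithinAt_Iio hmb hfi_right (hB.mono Iio_subset_Iic_self)
  rw [← integral_add_adjacent_intervals hfi_left hfi_right] at hupper ⊢
  have hba : 0 < b - a := sub_pos.2 hab
  have hdiff : (f a + f b) / 2 - 1 / (b - a) * ((∫ t in a..m, f t) + ∫ t in m..b, f t) =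
      ((f a + f b) / 2 * (b - a) - ((∫ t in a..m, f t) + ∫ t in m..b, f t)) / (b - a) := by
    field_simp
  rw [hdiff, div_le_iff₀ hba]
  refine ⟨div_nonneg (by linarith) hba.le, ?_⟩
  rw [show m - a = (b - a) / 2 by ring] at hlower_left
  rw [show b - m = (b - a) / 2 by ring] at hlower_right
  nlinarith
end
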